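/- Let G be a connected simple graph on [n] and let B = {ker(x_i) : i ∈ [n]} ⊆ A_G. Then the line-closure of B in A_G equals A_G, i.e. lc(B) = A_G; since |B| = n = rank(A_G), B is an lc-basis of A_G. -/

import Mathlib

open Submodule

/-! ## Basic definitions for hyperplane arrangements -/

/-- The linear form `∑_{i ∈ I} x_i` on `K^n`. -/
noncomputable def sumForm (n : ℕ) (K : Type*) [Field K] (I : Finset (Fin n)) :
    (Fin n → K) →ₗ[K] K :=
  ∑ i ∈ I, LinearMap.proj i

/-- The hyperplane `H_I = ker (∑_{i ∈ I} x_i)` in `K^n`. -/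
noncomputable def hypI (n : ℕ) (K : Type*) [Field K] (I : Finset (Fin n)) :
    Submodule K (Fin n → K) :=
  LinearMap.ker (sumForm n K I)

/-- The nonempty vertex subsets of `G` inducing connected subgraphs. -/
def connSets {n : ℕ} (G : SimpleGraph (Fin n)) : Set (Finset (Fin n)) :=
  {I | I.Nonempty ∧ (G.induce (I : Set (Fin n))).Connected}

/-- The connected subgraph arrangement `A_G(K)` in `K^n`. -/
noncomputable def connArr (K : Type*) [Field K] {n : ℕ} (G : SimpleGraph (Fin n)) :
    Set (Submodule K (Fin n → K)) :=
  (hypI n K) '' (connSets G)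

/-- The intersection lattice of a central arrangement: all intersections of
subfamilies of `A` (with the empty intersection being the ambient space `⊤`). -/
def lat {K V : Type*} [Field K] [AddCommGroup V] [Module K V]
    (A : Set (Submodule K V)) : Set (Submodule K V) :=
  {X | ∃ B ⊆ A, X = sInf B}

/-- A central arrangement: a finite set of hyperplanes (coatoms of the submodule
lattice) in `V`. -/
def IsCentralArr {K V : Type*} [Field K] [AddCommGroup V] [Module K V]
    (A : Set (Submodule K V)) : Prop :=
  A.Finite ∧ ∀ H ∈ A, IsCoatom H

/-- Two arrangements in `V` are linearly isomorphic. -/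
def LinIsom {K V : Type*} [Field K] [AddCommGroup V] [Module K V]
    (A B : Set (Submodule K V)) : Prop :=
  ∃ φ : V ≃ₗ[K] V, B = (Submodule.map (φ : V →ₗ[K] V)) '' A

/-- Two arrangements are `L`-equivalent: their intersection lattices are
isomorphic posets. -/
def LEquiv {K V W : Type*} [Field K] [AddCommGroup V] [Module K V]
    [AddCommGroup W] [Module K W]
    (A : Set (Submodule K V)) (B : Set (Submodule K W)) : Prop :=
  Nonempty (↥(lat A) ≃o ↥(lat B))

/-- An arrangement `A` in `V` is projectively unique if every central arrangement
in `V` that is `L`-equivalent to `A` is linearly isomorphic to `A`. -/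
def ProjUnique {K V : Type*} [Field K] [AddCommGroup V] [Module K V]
    (A : Set (Submodule K V)) : Prop :=
  ∀ B : Set (Submodule K V), IsCentralArr B → LEquiv B A → LinIsom B A

/-- `Gen_i(A,S)`. -/
def Gen {K V : Type*} [Field K] [AddCommGroup V] [Module K V]
    (A S : Set (Submodule K V)) : ℕ → Set (Submodule K V)
  | 0 => S
  | (i+1) => {H | H ∈ A ∧ ∃ J ⊆ lat (Gen A S i), H = sSup J}

/-- The subarrangement `⟨S⟩_A` of `A` generated by `S`. -/
def genSpan {K V : Type*} [Field K] [AddCommGroup V] [Module K V]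
    (A S : Set (Submodule K V)) : Set (Submodule K V) :=
  ⋃ i, Gen A S i

/-- An arrangement is irreducible if it is not (linearly isomorphic to)
a nontrivial product of two lower-dimensional arrangements. -/
def IsIrredArr {K V : Type*} [Field K] [AddCommGroup V] [Module K V]
    (A : Set (Submodule K V)) : Prop :=
  ¬ ∃ U W : Submodule K V, IsCompl U W ∧ U ≠ ⊥ ∧ W ≠ ⊥ ∧ ∀ H ∈ A, U ≤ H ∨ W ≤ H

/-! ## Freeness -/

/-- The linear form `f` as a degree one polynomial. -/
noncomputable def toPoly {n : ℕ} {K : Type*} [Field K] (f : (Fin n → K) →ₗ[K] K) :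
    MvPolynomial (Fin n) K :=
  ∑ i, MvPolynomial.C (f (Pi.single i 1)) * MvPolynomial.X i

/-- The module `D(A)` of logarithmic derivations of an arrangement in `K^n`:
all `θ` with `θ(α_H) ∈ (α_H)` for every defining form `α_H` of every `H ∈ A`. -/
noncomputable def logDer (K : Type*) [Field K] {n : ℕ}
    (A : Set (Submodule K (Fin n → K))) :
    Submodule (MvPolynomial (Fin n) K)
      (Derivation K (MvPolynomial (Fin n) K) (MvPolynomial (Fin n) K)) where
  carrier := {θ | ∀ H ∈ A, ∀ f : (Fin n → K) →ₗ[K] K, LinearMap.ker f = H →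
      θ (toPoly f) ∈ Ideal.span {toPoly f}}
  add_mem' := by
    intro a b ha hb H hH f hf
    simpa using add_mem (ha H hH f hf) (hb H hH f hf)
  zero_mem' := by
    intro H hH f hf
    simp
  smul_mem' := by
    intro c θ hθ H hH f hf
    simpa [smul_eq_mul] using Ideal.mul_mem_left _ c (hθ H hH f hf)

/-- An arrangement in `K^n` is free if its module of logarithmic derivations is
free over the polynomial ring. -/
def IsFreeArr (K : Type*) [Field K] {n : ℕ}
    (A : Set (Submodule K (Fin n → K))) : Prop :=
  Module.Free (MvPolynomial (Fin n) K) ↥(logDer K A)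

/-- Freeness with a prescribed tuple of exponents: there is a basis of `D(A)`
consisting of homogeneous derivations of the given degrees. -/
def IsFreeExp (K : Type*) [Field K] {n : ℕ} (A : Set (Submodule K (Fin n → K)))
    (e : Fin n → ℕ) : Prop :=
  ∃ b : Module.Basis (Fin n) (MvPolynomial (Fin n) K) ↥(logDer K A),
    ∀ i j, ((b i : Derivation K (MvPolynomial (Fin n) K) (MvPolynomial (Fin n) K))
      (MvPolynomial.X j)).IsHomogeneous (e i)

/-- The restriction `A^X` of an arrangement to a flat `X`, as an arrangement in `X`. -/
def restrictArr {K V : Type*} [Field K] [AddCommGroup V] [Module K V]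
    (A : Set (Submodule K V)) (X : Submodule K V) : Set (Submodule K ↥X) :=
  {Y | ∃ H ∈ A, ¬ X ≤ H ∧ Y = Submodule.comap X.subtype H}

/-- Freeness with prescribed exponents for an arrangement in an abstract space:
transport along a linear isomorphism with `K^d`. -/
def IsFreeExpOn {K W : Type*} [Field K] [AddCommGroup W] [Module K W]
    (A : Set (Submodule K W)) (d : ℕ) (e : Fin d → ℕ) : Prop :=
  ∃ φ : W ≃ₗ[K] (Fin d → K),
    IsFreeExp K ((Submodule.map (φ : W →ₗ[K] (Fin d → K))) '' A) e

/-- Accuracy: `A` is free with (sorted) exponents `e₁ ≤ … ≤ e_n` and for each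
`1 ≤ d ≤ n` some flat `X ∈ L(A)` of dimension `d` has free restriction `A^X`
with exponents `(e₁, …, e_d)`. -/
def IsAccurate (K : Type*) [Field K] {n : ℕ}
    (A : Set (Submodule K (Fin n → K))) : Prop :=
  ∃ e : Fin n → ℕ, Monotone e ∧ IsFreeExp K A e ∧
    ∀ d : ℕ, 1 ≤ d → ∀ (hdn : d ≤ n), ∃ X ∈ lat A, Module.finrank K ↥X = d ∧
      IsFreeExpOn (restrictArr A X) d (fun i => e ⟨i.1, lt_of_lt_of_le i.2 hdn⟩)

/-! ## Graphs -/

/-- The path graph on vertices `0, 1, …, n-1` (consecutive vertices adjacent). -/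
def pathGraph' (n : ℕ) : SimpleGraph (Fin n) :=
  SimpleGraph.fromRel (fun a b => a.1 + 1 = b.1)

/-- The almost-path graph `A_{n,k}` (vertices `1, …, n+1` of the paper are
`0, …, n` here): a path on `0, …, n-1` plus the vertex `n` joined to `k-1`. -/
def almostPathGraph (n k : ℕ) : SimpleGraph (Fin (n+1)) :=
  SimpleGraph.fromRel (fun a b => (a.1 + 1 = b.1 ∧ b.1 < n) ∨ (a.1 + 1 = k ∧ b.1 = n))

/-- The path-with-triangle graph `Δ_{n,k}` (vertices `1, …, n+1` of the paper are
`0, …, n` here): a path on `0, …, n-1` plus the vertex `n` joined to `k-1` and `k`. -/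
def pathTriangleGraph (n k : ℕ) : SimpleGraph (Fin (n+1)) :=
  SimpleGraph.fromRel (fun a b =>
    (a.1 + 1 = b.1 ∧ b.1 < n) ∨ ((a.1 + 1 = k ∨ a.1 = k) ∧ b.1 = n))

/-! ## Factored and inductively factored arrangements -/

/-- The localization `A_X`. -/
def locArr {K V : Type*} [Field K] [AddCommGroup V] [Module K V]
    (A : Set (Submodule K V)) (X : Submodule K V) : Set (Submodule K V) :=
  {H | H ∈ A ∧ X ≤ H}

/-- `P` is a partition of the set `A` (into nonempty blocks). -/
def IsPartitionOf {α : Type*} (A : Set α) (P : Set (Set α)) : Prop :=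
  (∀ B ∈ P, B.Nonempty) ∧ (∀ B ∈ P, B ⊆ A) ∧ ∀ a ∈ A, ∃! B, B ∈ P ∧ a ∈ B

/-- A partition of an arrangement is independent if any transversal choice of
hyperplanes, one from each block, is linearly independent (the codimension of the
intersection equals the number of blocks). -/
def IsIndepPartition {K V : Type*} [Field K] [AddCommGroup V] [Module K V]
    (P : Set (Set (Submodule K V))) : Prop :=
  ∀ f : Set (Submodule K V) → Submodule K V, (∀ B ∈ P, f B ∈ B) →
    Module.finrank K V = P.ncard + Module.finrank K ↥(⨅ B ∈ P, f B)

/-- A nice partition (factorization) of an arrangement. -/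
def IsNicePartition {K V : Type*} [Field K] [AddCommGroup V] [Module K V]
    (A : Set (Submodule K V)) (P : Set (Set (Submodule K V))) : Prop :=
  IsPartitionOf A P ∧ IsIndepPartition P ∧
    ∀ X ∈ lat A, X ≠ (⊤ : Submodule K V) →
      ∃ B ∈ P, ∃ H, B ∩ locArr A X = {H}

/-- An arrangement is factored (nice) if it admits a nice partition. -/
def IsFactored {K V : Type*} [Field K] [AddCommGroup V] [Module K V]
    (A : Set (Submodule K V)) : Prop :=
  ∃ P, IsNicePartition A P

/-- Inductively factored arrangements (in coordinate spaces `K^d`, restrictions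
being transported to a coordinate space by a linear isomorphism). -/
inductive IndFactored (K : Type) [Field K] :
    (d : ℕ) → Set (Submodule K (Fin d → K)) → Set (Set (Submodule K (Fin d → K))) → Prop
  | empty (d : ℕ) : IndFactored K d ∅ ∅
  | step (d : ℕ) (A : Set (Submodule K (Fin d → K)))
      (P : Set (Set (Submodule K (Fin d → K))))
      (B₁ : Set (Submodule K (Fin d → K))) (H₀ : Submodule K (Fin d → K))
      (e : ℕ) (φ : ↥H₀ ≃ₗ[K] (Fin e → K))
      (hB₁ : B₁ ∈ P) (hH₀B : H₀ ∈ B₁) (hH₀A : H₀ ∈ A)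
      (hbij : Set.BijOn (fun H => Submodule.comap H₀.subtype H) (A \ B₁)
        ((fun H => Submodule.comap H₀.subtype H) '' (A \ {H₀})))
      (hdel : IndFactored K d (A \ {H₀})
        {C | ∃ B ∈ P, C = B ∩ (A \ {H₀}) ∧ C.Nonempty})
      (hres : IndFactored K e
        ((fun Y => Submodule.map (φ : ↥H₀ →ₗ[K] (Fin e → K)) Y) ''
          ((fun H => Submodule.comap H₀.subtype H) '' (A \ {H₀})))
        {C | ∃ B ∈ P, B ≠ B₁ ∧
          C = (fun Y => Submodule.map (φ : ↥H₀ →ₗ[K] (Fin e → K)) Y) ''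
            ((fun H => Submodule.comap H₀.subtype H) '' B)}) :
      IndFactored K d A P

/-- Inductively free arrangements with their multisets of exponents. -/
inductive IndFree (K : Type) [Field K] :
    (d : ℕ) → Set (Submodule K (Fin d → K)) → Multiset ℕ → Prop
  | empty (d : ℕ) : IndFree K d ∅ (Multiset.replicate d 0)
  | step (d : ℕ) (A : Set (Submodule K (Fin d → K))) (H₀ : Submodule K (Fin d → K))
      (m : ℕ) (φ : ↥H₀ ≃ₗ[K] (Fin m → K)) (E : Multiset ℕ) (e : ℕ)
      (hH₀ : H₀ ∈ A)
      (hdel : IndFree K d (A \ {H₀}) (e ::ₘ E))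
      (hres : IndFree K m
        ((fun Y => Submodule.map (φ : ↥H₀ →ₗ[K] (Fin m → K)) Y) ''
          ((fun H => Submodule.comap H₀.subtype H) '' (A \ {H₀}))) E) :
      IndFree K d A ((e+1) ::ₘ E)

/-! ## Asphericity -/

/-- The complement of (the union of) a complex arrangement in `ℂ^n`. -/
def arrComp {n : ℕ} (A : Set (Submodule ℂ (Fin n → ℂ))) : Set (Fin n → ℂ) :=
  {v | ∀ H ∈ A, v ∉ H}

/-- A space is aspherical if all its homotopy groups `π_m`, `m ≥ 2`, vanish. -/
def IsAspherical (X : Type*) [TopologicalSpace X] : Prop :=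
  ∀ (x : X) (m : ℕ), 2 ≤ m → Subsingleton (HomotopyGroup (Fin m) X x)

/-- A complex arrangement is `K(π,1)` if its complement is aspherical. -/
def IsKPi1 {n : ℕ} (A : Set (Submodule ℂ (Fin n → ℂ))) : Prop :=
  IsAspherical ↥(arrComp A)

/-! ## Formality -/

/-- Formality: all linear dependencies among (any choice of) defining forms of the
hyperplanes are generated by the dependencies supported on rank-two flats. -/
def IsFormal {K V : Type*} [Field K] [AddCommGroup V] [Module K V]
    (A : Set (Submodule K V)) : Prop :=
  ∀ α : Submodule K V → (V →ₗ[K] K),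
    (∀ H ∈ A, LinearMap.ker (α H) = H) →
    ∀ c : Submodule K V →₀ K, ↑c.support ⊆ A →
      (∑ H ∈ c.support, c H • α H) = 0 →
      c ∈ Submodule.span K
        {r : Submodule K V →₀ K | ↑r.support ⊆ A ∧
          (∑ H ∈ r.support, r H • α H) = 0 ∧
          ∃ X ∈ lat A, Module.finrank K (V ⧸ X) = 2 ∧ ∀ H ∈ r.support, X ≤ H}

/-- Combinatorial formality. -/
def IsCombFormal {K V : Type*} [Field K] [AddCommGroup V] [Module K V]
    (A : Set (Submodule K V)) : Prop :=
  IsFormal A ∧ ∀ (K' : Type) [Field K'] (m : ℕ) (B : Set (Submodule K' (Fin m → K'))),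
    IsCentralArr B → Nonempty (↥(lat B) ≃o ↥(lat A)) → IsFormal B

/-! ## Line closure -/

/-- `C` is a line-closed subset of the arrangement `A`. -/
def IsLineClosed {K V : Type*} [Field K] [AddCommGroup V] [Module K V]
    (A C : Set (Submodule K V)) : Prop :=
  ∀ H ∈ C, ∀ H' ∈ C, {H'' | H'' ∈ A ∧ H ⊓ H' ≤ H''} ⊆ C

/-- The line closure of `B` in `A`. -/
def lineClosure {K V : Type*} [Field K] [AddCommGroup V] [Module K V]
    (A B : Set (Submodule K V)) : Set (Submodule K V) :=
  ⋂₀ {C | B ⊆ C ∧ C ⊆ A ∧ IsLineClosed A C}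

/-! ## MAT-freeness -/

/-- MAT-freeness of an arrangement in `K^n`. -/
def IsMATFree (K : Type*) [Field K] {n : ℕ}
    (A : Set (Submodule K (Fin n → K))) : Prop :=
  ∃ (m : ℕ) (π : Fin m → Set (Submodule K (Fin n → K))),
    (⋃ i, π i) = A ∧
    (∀ i, (π i).Nonempty) ∧
    (∀ i j, i ≠ j → Disjoint (π i) (π j)) ∧
    ∀ j : Fin m,
      (n = (π j).ncard + Module.finrank K ↥(sInf (π j) : Submodule K (Fin n → K))) ∧
      (¬ (SetLike.coe (sInf (π j) : Submodule K (Fin n → K)) ⊆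
          ⋃ H ∈ {H | ∃ i : Fin m, i < j ∧ H ∈ π i}, SetLike.coe H)) ∧
      ∀ H ∈ π j,
        {H' | ∃ i : Fin m, i < j ∧ H' ∈ π i}.ncard =
          ((fun H' => H' ⊓ H) '' {H' | ∃ i : Fin m, i < j ∧ H' ∈ π i}).ncard + j.1

/-! ## Subarrangements by size, supersolvability -/

/-- The ideal subarrangement `A_G^s` of hyperplanes `H_I` with `|I| ≤ s`. -/
noncomputable def AGs (K : Type*) [Field K] {n : ℕ} (G : SimpleGraph (Fin n)) (s : ℕ) :
    Set (Submodule K (Fin n → K)) :=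
  hypI n K '' {I | I ∈ connSets G ∧ I.card ≤ s}

/-- The closure of a subspace in the intersection lattice of `A`. -/
noncomputable def flatClosure {K V : Type*} [Field K] [AddCommGroup V] [Module K V]
    (A : Set (Submodule K V)) (Z : Submodule K V) : Submodule K V :=
  sInf {H | H ∈ A ∧ Z ≤ H}

/-- The rank (codimension) of a subspace of `K^n`. -/
noncomputable def arrRank (K : Type*) [Field K] {n : ℕ}
    (X : Submodule K (Fin n → K)) : ℕ :=
  n - Module.finrank K ↥X

/-- A modular flat of an arrangement. -/
noncomputable def IsModularFlat (K : Type*) [Field K] {n : ℕ}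
    (A : Set (Submodule K (Fin n → K))) (X : Submodule K (Fin n → K)) : Prop :=
  X ∈ lat A ∧ ∀ Y ∈ lat A,
    arrRank K X + arrRank K Y =
      arrRank K (X ⊓ Y) + arrRank K (flatClosure A (X ⊔ Y))

/-- Supersolvability: a maximal chain of modular flats in `L(A)`. -/
noncomputable def IsSupersolvable (K : Type*) [Field K] {n : ℕ}
    (A : Set (Submodule K (Fin n → K))) : Prop :=
  ∃ c : ℕ → Submodule K (Fin n → K),
    c 0 = ⊤ ∧ c (arrRank K (sInf A)) = sInf A ∧
    (∀ i ≤ arrRank K (sInf A), IsModularFlat K A (c i) ∧ arrRank K (c i) = i) ∧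
    ∀ i < arrRank K (sInf A), c (i + 1) ≤ c i

/-! A line-closed `C ⊆ A_G` containing every `ker x_i` contains `H_S` for the vertex set `S`
of every walk in `G`: prepending a new vertex `u` turns `S` into the connected set `S ∪ {u}`,
and `H_S ∩ ker x_u ⊆ H_{S ∪ {u}}`. A connected `I` is the vertex set of a closed walk in `G[I]`
through all of its vertices. -/

theorem lineClosure_subset {K V : Type*} [Field K] [AddCommGroup V] [Module K V]
    {A B : Set (Submodule K V)} (hB : B ⊆ A) : lineClosure A B ⊆ A :=
  Set.sInter_subset_of_mem ⟨hB, subset_rfl, fun _ _ _ _ _ h => h.1⟩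

section HyperplaneSums

variable {n : ℕ} {K : Type*} [Field K]

theorem mem_hypI {I : Finset (Fin n)} {x : Fin n → K} :
    x ∈ hypI n K I ↔ ∑ i ∈ I, x i = 0 := by
  simp [hypI, sumForm]

theorem hypI_inf_hypI_le_hypI_union {I J : Finset (Fin n)} (h : Disjoint I J) :
    hypI n K I ⊓ hypI n K J ≤ hypI n K (I ∪ J) := fun x hx => by
  rw [mem_inf, mem_hypI, mem_hypI] at hx
  rw [mem_hypI, Finset.sum_union h, hx.1, hx.2, add_zero]

theorem single_mem_hypI_singleton_iff {i j : Fin n} :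
    Pi.single i (1 : K) ∈ hypI n K {j} ↔ i ≠ j := by
  rw [mem_hypI, Finset.sum_singleton]
  rcases eq_or_ne i j with rfl | hij
  · simp
  · simp [hij]

theorem hypI_singleton_injective :
    Function.Injective fun i : Fin n => hypI n K {i} := fun i j h => by
  have hij : hypI n K {i} = hypI n K {j} := h
  by_contra hne
  exact single_mem_hypI_singleton_iff.1 (hij ▸ single_mem_hypI_singleton_iff.2 hne) rfl

theorem iInf_hypI_singleton : ⨅ i : Fin n, hypI n K {i} = ⊥ :=
  eq_bot_iff.2 fun x hx => (mem_bot K).2 <| funext fun i => by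
    simpa [mem_hypI] using mem_iInf _ |>.1 hx i

end HyperplaneSums

namespace SimpleGraph

variable {V : Type*} {G : SimpleGraph V}

theorem Preconnected.exists_walk_forall_mem_support (hG : G.Preconnected) (u : V)
    (s : Finset V) : ∃ p : G.Walk u u, ∀ v ∈ s, v ∈ p.support := by
  classical
  induction s using Finset.induction_on with
  | empty => exact ⟨Walk.nil, by simp⟩
  | insert a s _ ih =>
    obtain ⟨p, hp⟩ := ih
    obtain ⟨q⟩ := hG u a
    refine ⟨(q.append q.reverse).append p, fun v hv => ?_⟩
    rcases Finset.mem_insert.1 hv with rfl | hv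
    · simp
    · simp [hp v hv]

theorem exists_walk_support_toFinset_eq [DecidableEq V] {I : Finset V}
    (hI : (G.induce (I : Set V)).Connected) :
    ∃ (u v : V) (p : G.Walk u v), p.support.toFinset = I := by
  obtain ⟨u⟩ := hI.nonempty
  obtain ⟨p, hp⟩ := hI.preconnected.exists_walk_forall_mem_support u Finset.univ
  refine ⟨_, _, p.map (Embedding.induce _).toHom, Finset.ext fun x => ?_⟩
  rw [List.mem_toFinset, Walk.support_map, List.mem_map]
  exact ⟨by rintro ⟨y, -, rfl⟩; exact y.2, fun hx => ⟨⟨x, hx⟩, hp _ (Finset.mem_univ _), rfl⟩⟩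

end SimpleGraph

namespace SimpleGraph.Walk

variable {n : ℕ} {K : Type*} [Field K] {G : SimpleGraph (Fin n)}

theorem support_toFinset_mem_connSets {u v : Fin n} (p : G.Walk u v) :
    p.support.toFinset ∈ connSets G := by
  refine ⟨⟨u, by simp⟩, ?_⟩
  rw [List.coe_toFinset]
  exact p.connected_induce_support

theorem hypI_support_toFinset_mem {C : Set (Submodule K (Fin n → K))}
    (hC : IsLineClosed (connArr K G) C) (hsingle : ∀ i, hypI n K {i} ∈ C) {u v : Fin n}
    (p : G.Walk u v) : hypI n K p.support.toFinset ∈ C := by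
  induction p with
  | nil => simpa using hsingle _
  | @cons u w v h q ih =>
    have hsupp : (cons h q).support.toFinset = insert u q.support.toFinset := by simp
    by_cases hu : u ∈ q.support.toFinset
    · rwa [hsupp, Finset.insert_eq_of_mem hu]
    refine hC _ ih _ (hsingle u) ⟨⟨_, (cons h q).support_toFinset_mem_connSets, rfl⟩, ?_⟩
    rw [hsupp, Finset.insert_eq, Finset.union_comm]
    exact hypI_inf_hypI_le_hypI_union (Finset.disjoint_singleton_right.2 hu)

end SimpleGraph.Walk

section ConnArr

variable {n : ℕ} {K : Type*} [Field K] {G : SimpleGraph (Fin n)}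

theorem singleton_mem_connSets (i : Fin n) : {i} ∈ connSets G := by
  simpa using (SimpleGraph.Walk.nil : G.Walk i i).support_toFinset_mem_connSets

theorem range_hypI_singleton_subset_connArr :
    (Set.range fun i : Fin n => hypI n K {i}) ⊆ connArr K G := by
  rintro _ ⟨i, rfl⟩
  exact ⟨{i}, singleton_mem_connSets i, rfl⟩

theorem connArr_subset_of_isLineClosed {C : Set (Submodule K (Fin n → K))}
    (hC : IsLineClosed (connArr K G) C) (hsingle : ∀ i, hypI n K {i} ∈ C) :
    connArr K G ⊆ C := by
  rintro _ ⟨I, hI, rfl⟩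
  obtain ⟨u, v, p, rfl⟩ := SimpleGraph.exists_walk_support_toFinset_eq hI.2
  exact p.hypI_support_toFinset_mem hC hsingle

end ConnArr

theorem connArr_lineClosure_general (n : ℕ) (G : SimpleGraph (Fin n)) :
    lineClosure (connArr ℚ G) (Set.range fun i : Fin n => hypI n ℚ {i}) =
      connArr ℚ G ∧
    (Set.range fun i : Fin n => hypI n ℚ {i}).ncard = n ∧
    sInf (connArr ℚ G) = ⊥ := by
  have hB := range_hypI_singleton_subset_connArr (K := ℚ) (G := G)
  refine ⟨?_, ?_, ?_⟩
  · refine (lineClosure_subset hB).antisymm ?_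
    rintro H hH C ⟨hBC, -, hC⟩
    exact connArr_subset_of_isLineClosed hC (fun i => hBC ⟨i, rfl⟩) hH
  · rw [Set.ncard_range_of_injective hypI_singleton_injective, Nat.card_fin]
  · rw [eq_bot_iff, ← iInf_hypI_singleton (K := ℚ) (n := n), ← sInf_range]
    exact sInf_le_sInf hB

/-- For a connected simple graph `G` on `[n]` and the Boolean
subarrangement `B = {ker x_i : i ∈ [n]}` of `A_G`, the line closure of `B` in
`A_G` is all of `A_G`; since `|B| = n = rank A_G`, `B` is an lc-basis of `A_G`. -/
theorem connArr_lineClosure (n : ℕ) (G : SimpleGraph (Fin n)) (hG : G.Connected) :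
    lineClosure (connArr ℚ G) (Set.range fun i : Fin n => hypI n ℚ {i}) =
      connArr ℚ G ∧
    (Set.range fun i : Fin n => hypI n ℚ {i}).ncard = n ∧
    sInf (connArr ℚ G) = ⊥ :=
  connArr_lineClosure_general n G
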